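/- Let α, μ > 0, let ω, ρ, τ > 0 be impairment parameters, and let 0 < γ_th < ω/ρ. For γ̄ > 0, let P_out(γ̄) denote the probability that Y = ω·X/(ρ·X + τ) falls below γ_th, where X has the α-μ SNR density f_{γ̄}. Then P_out(γ̄) · γ̄^{αμ/2} tends to (μ^{μ−1}/Γ(μ)) · (τ·γ_th/(ω − ρ·γ_th))^{αμ/2} as γ̄ → ∞. -/

import Mathlib

open Real MeasureTheory Filter Topology

/-- The α-μ SNR probability density function. -/
noncomputable def alphaMuDensity (α μ γbar γ : ℝ) : ℝ :=
  if γ ≤ 0 then 0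
  else (α * μ ^ μ) / (2 * Real.Gamma μ * γbar ^ (α * μ / 2)) * γ ^ (α * μ / 2 - 1) *
    Real.exp (-μ * (γ / γbar) ^ (α / 2))

/-!
Outage means `X ≤ x⋆ := τ γth / (ω - ρ γth)`, so `P_out(γ̄) γ̄^{αμ/2}` is the integral over `(0, x⋆]`
of `α μ^μ / (2 Γ(μ)) · γ^{αμ/2 - 1} · exp(-μ (γ/γ̄)^{α/2})`. As `γ̄ → ∞` the exponential factor
tends to `1` and is bounded by `1`, so by dominated convergence the limit is
`α μ^μ / (2 Γ(μ)) ∫₀^{x⋆} γ^{αμ/2 - 1} dγ = μ^{μ-1} / Γ(μ) · x⋆^{αμ/2}`.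
-/

lemma impairedSINR_le_iff {ω ρ τ γth x : ℝ} (hρ : 0 ≤ ρ) (hτ : 0 < τ) (hγth : ρ * γth < ω)
    (hx : 0 < x) : ω * x / (ρ * x + τ) ≤ γth ↔ x ≤ τ * γth / (ω - ρ * γth) := by
  rw [div_le_iff₀ (by positivity), le_div_iff₀ (by linarith)]
  constructor <;> intro h <;> linarith

lemma setOf_impairedSINR_le_inter_Ioi {ω ρ τ γth : ℝ} (hρ : 0 ≤ ρ) (hτ : 0 < τ)
    (hγth : ρ * γth < ω) :
    {x : ℝ | ω * x / (ρ * x + τ) ≤ γth} ∩ Set.Ioi 0 = Set.Ioc 0 (τ * γth / (ω - ρ * γth)) := by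
  ext x
  simp only [Set.mem_inter_iff, Set.mem_ofPred_eq, Set.mem_Ioi, Set.mem_Ioc]
  constructor
  · rintro ⟨hle, hx⟩
    exact ⟨hx, (impairedSINR_le_iff hρ hτ hγth hx).1 hle⟩
  · rintro ⟨hx, hle⟩
    exact ⟨(impairedSINR_le_iff hρ hτ hγth hx).2 hle, hx⟩

lemma setIntegral_eq_setIntegral_inter_Ioi {f : ℝ → ℝ} {s : Set ℝ} (hs : MeasurableSet s)
    (hf : ∀ x ≤ 0, f x = 0) : ∫ x in s, f x = ∫ x in s ∩ Set.Ioi 0, f x :=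
  setIntegral_eq_of_subset_of_forall_sdiff_eq_zero hs Set.inter_subset_left
    fun _ hx => hf _ (not_lt.1 fun h => hx.2 ⟨hx.1, h⟩)

lemma alphaMuDensity_of_nonpos {α μ γbar γ : ℝ} (hγ : γ ≤ 0) : alphaMuDensity α μ γbar γ = 0 :=
  if_pos hγ

lemma alphaMuDensity_mul_rpow {α μ γbar γ : ℝ} (hγbar : 0 < γbar) (hγ : 0 < γ) :
    alphaMuDensity α μ γbar γ * γbar ^ (α * μ / 2) =
      α * μ ^ μ / (2 * Gamma μ) * γ ^ (α * μ / 2 - 1) * exp (-μ * (γ / γbar) ^ (α / 2)) := by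
  have : γbar ^ (α * μ / 2) ≠ 0 := (rpow_pos_of_pos hγbar _).ne'
  rw [alphaMuDensity, if_neg hγ.not_ge]
  field_simp

lemma tendsto_exp_neg_mul_div_rpow_atTop (μ γ : ℝ) {p : ℝ} (hp : 0 < p) :
    Tendsto (fun b : ℝ => exp (-μ * (γ / b) ^ p)) atTop (𝓝 1) := by
  have hdiv : Tendsto (fun b : ℝ => γ / b) atTop (𝓝 0) :=
    tendsto_const_nhds.div_atTop tendsto_id
  have hpow := (hdiv.rpow_const (Or.inr hp.le)).const_mul (-μ)
  rw [zero_rpow hp.ne', mul_zero] at hpow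
  simpa using hpow.rexp

lemma exp_neg_mul_rpow_le_one {μ t p : ℝ} (hμ : 0 ≤ μ) (ht : 0 ≤ t) : exp (-μ * t ^ p) ≤ 1 :=
  exp_le_one_iff.2 (by nlinarith [rpow_nonneg ht p])

lemma tendsto_setIntegral_mul_exp_neg_mul_div_rpow_atTop {f : ℝ → ℝ} {s : Set ℝ} {μ p : ℝ}
    (hs : MeasurableSet s) (hs0 : s ⊆ Set.Ici 0) (hμ : 0 ≤ μ) (hp : 0 < p)
    (hf : IntegrableOn f s) :
    Tendsto (fun b : ℝ => ∫ γ in s, f γ * exp (-μ * (γ / b) ^ p)) atTop (𝓝 (∫ γ in s, f γ)) := by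
  refine tendsto_integral_filter_of_dominated_convergence (fun γ => ‖f γ‖)
    (Eventually.of_forall fun _ => hf.1.mul (by fun_prop : Measurable _).aestronglyMeasurable)
    ?_ hf.norm (ae_of_all _ fun γ => by
      simpa using (tendsto_exp_neg_mul_div_rpow_atTop μ γ hp).const_mul (f γ))
  filter_upwards [eventually_gt_atTop 0] with b hb
  filter_upwards [ae_restrict_mem hs] with γ hγ
  rw [norm_mul, norm_of_nonneg (exp_pos _).le]
  exact mul_le_of_le_one_right (norm_nonneg _)
    (exp_neg_mul_rpow_le_one hμ (div_nonneg (hs0 hγ) hb.le))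

lemma integral_Ioc_rpow_sub_one {p x : ℝ} (hp : 0 < p) (hx : 0 ≤ x) :
    ∫ γ in Set.Ioc 0 x, γ ^ (p - 1) = x ^ p / p := by
  rw [← intervalIntegral.integral_of_le hx, integral_rpow (Or.inl (by linarith)), sub_add_cancel,
    zero_rpow hp.ne', sub_zero]

lemma integrableOn_Ioc_rpow_sub_one {p x : ℝ} (hp : 0 < p) (hx : 0 ≤ x) :
    IntegrableOn (fun γ : ℝ => γ ^ (p - 1)) (Set.Ioc 0 x) :=
  (intervalIntegrable_iff_integrableOn_Ioc_of_le hx).1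
    (intervalIntegral.intervalIntegrable_rpow' (by linarith))

theorem stmt_13_general (α μ : ℝ) (hα : 0 < α) (hμ : 0 < μ)
    (ω ρ τ : ℝ) (hρ : 0 < ρ) (hτ : 0 < τ)
    (γth : ℝ) (hγth0 : 0 < γth) (hγth : γth < ω / ρ)
    (Pout : ℝ → ℝ)
    (hPout : ∀ γbar : ℝ, 0 < γbar →
      Pout γbar = ∫ γ in {x : ℝ | ω * x / (ρ * x + τ) ≤ γth}, alphaMuDensity α μ γbar γ) :
    Tendsto (fun γbar : ℝ => Pout γbar * γbar ^ (α * μ / 2)) atTop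
      (𝓝 ((μ ^ (μ - 1) / Real.Gamma μ) * (τ * γth / (ω - ρ * γth)) ^ (α * μ / 2))) := by
  have hργ : ρ * γth < ω := (lt_div_iff₀' hρ).1 hγth
  set xs := τ * γth / (ω - ρ * γth)
  have hxs : 0 ≤ xs := div_nonneg (by positivity) (by linarith)
  set C := α * μ ^ μ / (2 * Gamma μ) with hC
  have hp : 0 < α * μ / 2 := by positivity
  have hPout_eq : ∀ γbar > 0, Pout γbar * γbar ^ (α * μ / 2) =
      ∫ γ in Set.Ioc 0 xs, C * γ ^ (α * μ / 2 - 1) * exp (-μ * (γ / γbar) ^ (α / 2)) := by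
    intro γbar hγbar
    rw [hPout γbar hγbar, setIntegral_eq_setIntegral_inter_Ioi
      (measurableSet_le (by fun_prop) measurable_const) fun _ => alphaMuDensity_of_nonpos,
      setOf_impairedSINR_le_inter_Ioi hρ.le hτ hργ, ← integral_mul_const]
    exact setIntegral_congr_fun measurableSet_Ioc fun γ hγ => alphaMuDensity_mul_rpow hγbar hγ.1
  have hlimit : ∫ γ in Set.Ioc 0 xs, C * γ ^ (α * μ / 2 - 1) =
      μ ^ (μ - 1) / Gamma μ * xs ^ (α * μ / 2) := by
    rw [integral_const_mul, integral_Ioc_rpow_sub_one hp hxs, rpow_sub_one hμ.ne', hC]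
    field_simp
  rw [← hlimit]
  refine (tendsto_setIntegral_mul_exp_neg_mul_div_rpow_atTop measurableSet_Ioc
    (Set.Ioc_subset_Ioi_self.trans Set.Ioi_subset_Ici_self) hμ.le (p := α / 2) (by positivity)
    ((integrableOn_Ioc_rpow_sub_one hp hxs).const_mul C)).congr' ?_
  filter_upwards [eventually_gt_atTop 0] with γbar hγbar
  exact (hPout_eq γbar hγbar).symm

theorem stmt_13 (α μ : ℝ) (hα : 0 < α) (hμ : 0 < μ)
    (ω ρ τ : ℝ) (hω : 0 < ω) (hρ : 0 < ρ) (hτ : 0 < τ)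
    (γth : ℝ) (hγth0 : 0 < γth) (hγth : γth < ω / ρ)
    (Pout : ℝ → ℝ)
    (hPout : ∀ γbar : ℝ, 0 < γbar →
      Pout γbar = ∫ γ in {x : ℝ | ω * x / (ρ * x + τ) ≤ γth}, alphaMuDensity α μ γbar γ) :
    Tendsto (fun γbar : ℝ => Pout γbar * γbar ^ (α * μ / 2)) atTop
      (𝓝 ((μ ^ (μ - 1) / Real.Gamma μ) * (τ * γth / (ω - ρ * γth)) ^ (α * μ / 2))) :=
  stmt_13_general α μ hα hμ ω ρ τ hρ hτ γth hγth0 hγth Pout hPout
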